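/- Let m = (ξ_A, ξ_B) be a compatible net counter-clockwise motion from P₀ = (A₀,B₀) to P₁ = (A₁,B₁), with traces C_A = ξ_A([0,1]) and C_B = ξ_B([0,1]). Then for every θ ∈ ℝ, h_{C_A}(θ) + h_{C_B}(θ + π) ≥ H_AB(θ), and for every r ∈ [0,Δ], h_{C_A}(θ₀ + r) + h_{C_B}(θ₀ + r + π) ≥ max(H_AB(θ₀ + r), s). -/

import Mathlib

open Set Real RealInnerProductSpace

noncomputable section

/-- The Euclidean plane ℝ². -/
abbrev Plane := EuclideanSpace ℝ (Fin 2)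

/-- Unit vector at angle `θ`. -/
def uvec (θ : ℝ) : Plane := WithLp.toLp 2 ![Real.cos θ, Real.sin θ]

/-- Support function of a set `C ⊆ ℝ²` at angle `θ`. -/
def supp (C : Set Plane) (θ : ℝ) : ℝ := sSup ((fun x => ⟪x, uvec θ⟫) '' C)

/-- Length of a curve: its total variation on `[0,1]`. -/
def plen (ξ : ℝ → Plane) : ℝ := (eVariationOn ξ (Icc 0 1)).toReal

/-- A compatible motion of two discs with radius sum `s` from placement `(A₀,B₀)`
to placement `(A₁,B₁)`. -/
structure IsCompatMotion (s : ℝ) (A₀ B₀ A₁ B₁ : Plane) (ξA ξB : ℝ → Plane) : Prop where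
  contA : ContinuousOn ξA (Icc 0 1)
  contB : ContinuousOn ξB (Icc 0 1)
  bvA : BoundedVariationOn ξA (Icc 0 1)
  bvB : BoundedVariationOn ξB (Icc 0 1)
  startA : ξA 0 = A₀
  stopA : ξA 1 = A₁
  startB : ξB 0 = B₀
  stopB : ξB 1 = B₁
  compat : ∀ t ∈ Icc (0:ℝ) 1, s ≤ ‖ξA t - ξB t‖

lemma norm_uvec (θ : ℝ) : ‖uvec θ‖ = 1 := by
  simp [uvec, EuclideanSpace.norm_eq, Fin.sum_univ_two]

lemma uvec_add_pi (θ : ℝ) : uvec (θ + π) = -uvec θ := by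
  ext i
  fin_cases i <;> simp [uvec, cos_add_pi, sin_add_pi]

lemma uvec_add_two_pi_mul_int (θ : ℝ) (k : ℤ) : uvec (θ + 2 * π * k) = uvec θ := by
  rw [show θ + 2 * π * k = θ + k * (2 * π) by ring]
  ext i
  fin_cases i <;> simp [uvec, cos_add_int_mul_two_pi, sin_add_int_mul_two_pi]

lemma inner_uvec_of_eq_norm_smul {v : Plane} {θ : ℝ} (hv : v = ‖v‖ • uvec θ) :
    ⟪v, uvec θ⟫ = ‖v‖ := by
  rw [hv, real_inner_smul_left, real_inner_self_eq_norm_sq, norm_uvec, one_pow, mul_one, ← hv]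

lemma inner_uvec_le_supp {C : Set Plane} (hC : IsCompact C) {x : Plane} (hx : x ∈ C) (θ : ℝ) :
    ⟪x, uvec θ⟫ ≤ supp C θ :=
  le_csSup ((hC.image (continuous_id.inner continuous_const)).bddAbove) (mem_image_of_mem _ hx)

lemma max_inner_uvec_le_supp {C : Set Plane} (hC : IsCompact C) {x y : Plane} (hx : x ∈ C)
    (hy : y ∈ C) (θ : ℝ) : max ⟪x, uvec θ⟫ ⟪y, uvec θ⟫ ≤ supp C θ :=
  max_le (inner_uvec_le_supp hC hx θ) (inner_uvec_le_supp hC hy θ)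

/-- `supp C θ + supp D (θ + π)` is the support function of `C - D` at `θ`. -/
lemma inner_sub_uvec_le_supp_add_supp {C D : Set Plane} (hC : IsCompact C) (hD : IsCompact D)
    {x y : Plane} (hx : x ∈ C) (hy : y ∈ D) (θ : ℝ) :
    ⟪x - y, uvec θ⟫ ≤ supp C θ + supp D (θ + π) := by
  have hy' := inner_uvec_le_supp hD hy (θ + π)
  rw [uvec_add_pi, inner_neg_right] at hy'
  rw [inner_sub_left]
  linarith [inner_uvec_le_supp hC hx θ]

lemma isCompact_image_Icc {ξ : ℝ → Plane} (hξ : ContinuousOn ξ (Icc 0 1)) :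
    IsCompact (ξ '' Icc 0 1) :=
  isCompact_Icc.image_of_continuousOn hξ

theorem support_pointwise_lower_bound_of_netCCW_general
    (s : ℝ) (A₀ B₀ A₁ B₁ : Plane) (ξA ξB : ℝ → Plane)
    (hm : IsCompatMotion s A₀ B₀ A₁ B₁ ξA ξB)
    (θm : ℝ → ℝ)
    (hlift : ∀ t ∈ Icc (0:ℝ) 1, ξA t - ξB t = ‖ξA t - ξB t‖ • uvec (θm t))
    (Δ : ℝ)
    (hccw : ∀ r ∈ Icc 0 Δ, ∃ t ∈ Icc (0:ℝ) 1, ∃ k : ℤ, θm t = θm 0 + r + 2 * π * k) :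
    (∀ θ : ℝ,
      max ⟪A₀, uvec θ⟫ ⟪A₁, uvec θ⟫ + max ⟪B₀, uvec (θ + π)⟫ ⟪B₁, uvec (θ + π)⟫ ≤
        supp (ξA '' Icc 0 1) θ + supp (ξB '' Icc 0 1) (θ + π)) ∧
    (∀ r ∈ Icc 0 Δ,
      max (max ⟪A₀, uvec (θm 0 + r)⟫ ⟪A₁, uvec (θm 0 + r)⟫ +
           max ⟪B₀, uvec (θm 0 + r + π)⟫ ⟪B₁, uvec (θm 0 + r + π)⟫) s ≤
        supp (ξA '' Icc 0 1) (θm 0 + r) + supp (ξB '' Icc 0 1) (θm 0 + r + π)) := by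
  have hCA := isCompact_image_Icc hm.contA
  have hCB := isCompact_image_Icc hm.contB
  have h0 : (0:ℝ) ∈ Icc (0:ℝ) 1 := left_mem_Icc.2 zero_le_one
  have h1 : (1:ℝ) ∈ Icc (0:ℝ) 1 := right_mem_Icc.2 zero_le_one
  have hends : ∀ θ : ℝ,
      max ⟪A₀, uvec θ⟫ ⟪A₁, uvec θ⟫ + max ⟪B₀, uvec (θ + π)⟫ ⟪B₁, uvec (θ + π)⟫ ≤
        supp (ξA '' Icc 0 1) θ + supp (ξB '' Icc 0 1) (θ + π) := by
    intro θ
    rw [← hm.startA, ← hm.stopA, ← hm.startB, ← hm.stopB]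
    exact add_le_add
      (max_inner_uvec_le_supp hCA (mem_image_of_mem _ h0) (mem_image_of_mem _ h1) θ)
      (max_inner_uvec_le_supp hCB (mem_image_of_mem _ h0) (mem_image_of_mem _ h1) (θ + π))
  refine ⟨hends, fun r hr => max_le (hends _) ?_⟩
  -- the motion passes through direction `θ₀ + r` at some time `t`, where `A` and `B` are `s` apart
  obtain ⟨t, ht, k, hk⟩ := hccw r hr
  have hdir : ⟪ξA t - ξB t, uvec (θm 0 + r)⟫ = ‖ξA t - ξB t‖ := by
    rw [← uvec_add_two_pi_mul_int _ k, ← hk]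
    exact inner_uvec_of_eq_norm_smul (hlift t ht)
  calc s ≤ ‖ξA t - ξB t‖ := hm.compat t ht
    _ = ⟪ξA t - ξB t, uvec (θm 0 + r)⟫ := hdir.symm
    _ ≤ _ := inner_sub_uvec_le_supp_add_supp hCA hCB (mem_image_of_mem _ ht)
        (mem_image_of_mem _ ht) _

/-- for a compatible net counter-clockwise motion with traces
`C_A, C_B`: for every `θ`, `h_{C_A}(θ) + h_{C_B}(θ+π) ≥ H_AB(θ)`, and for every
`r ∈ [0,Δ]`, `h_{C_A}(θ₀+r) + h_{C_B}(θ₀+r+π) ≥ max(H_AB(θ₀+r), s)`, where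
`H_AB(θ) = max(⟨A₀,u θ⟩,⟨A₁,u θ⟩) + max(⟨B₀,u (θ+π)⟩,⟨B₁,u (θ+π)⟩)`. -/
theorem support_pointwise_lower_bound_of_netCCW
    (s : ℝ) (hs : 0 < s) (A₀ B₀ A₁ B₁ : Plane) (ξA ξB : ℝ → Plane)
    (hm : IsCompatMotion s A₀ B₀ A₁ B₁ ξA ξB)
    (θm : ℝ → ℝ) (hθcont : ContinuousOn θm (Icc 0 1))
    (hlift : ∀ t ∈ Icc (0:ℝ) 1, ξA t - ξB t = ‖ξA t - ξB t‖ • uvec (θm t))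
    (Δ : ℝ) (hΔ0 : 0 ≤ Δ) (hΔlt : Δ < 2 * π)
    (hΔ : ∃ k : ℤ, θm 1 = θm 0 + Δ + 2 * π * k)
    (hccw : ∀ r ∈ Icc 0 Δ, ∃ t ∈ Icc (0:ℝ) 1, ∃ k : ℤ, θm t = θm 0 + r + 2 * π * k) :
    (∀ θ : ℝ,
      max ⟪A₀, uvec θ⟫ ⟪A₁, uvec θ⟫ + max ⟪B₀, uvec (θ + π)⟫ ⟪B₁, uvec (θ + π)⟫ ≤
        supp (ξA '' Icc 0 1) θ + supp (ξB '' Icc 0 1) (θ + π)) ∧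
    (∀ r ∈ Icc 0 Δ,
      max (max ⟪A₀, uvec (θm 0 + r)⟫ ⟪A₁, uvec (θm 0 + r)⟫ +
           max ⟪B₀, uvec (θm 0 + r + π)⟫ ⟪B₁, uvec (θm 0 + r + π)⟫) s ≤
        supp (ξA '' Icc 0 1) (θm 0 + r) + supp (ξB '' Icc 0 1) (θm 0 + r + π)) :=
  support_pointwise_lower_bound_of_netCCW_general s A₀ B₀ A₁ B₁ ξA ξB hm θm hlift Δ hccw
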